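/- Let m ∈ ℕ₀, (i_1, …, i_m) ∈ N^m and a ∈ A; for 1 ≤ r ≤ m set a_r := i_r⋯i_m ▷ a, and let w be the σ-composite of the word (i_1, …, i_m) at a. Then the set w(R⁺_a) ∩ (−R⁺_{a_1}) is finite and m − |w(R⁺_a) ∩ (−R⁺_{a_1})| is a nonnegative even integer. Moreover, if |w(R⁺_a) ∩ (−R⁺_{a_1})| = m, then w(R⁺_a) ∩ (−R⁺_{a_1}) = { −v_r(α_{i_r,a_r}) : 1 ≤ r ≤ m }, where v_r denotes the σ-composite of the word (i_1, …, i_{r−1}) at a_r. -/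

import Mathlib

open Pointwise

variable {N : Type*} {A : Type*}

/-- The element `(i j)^m ▷ a` for the action of `F₂(N)` on `A`. -/
def altIter (act : N → A → A) (i j : N) (a : A) : ℕ → A
  | 0 => a
  | m + 1 => act i (act j (altIter act i j a m))

/-- The set `Θ(i,j;a)`. -/
def ThetaSet (act : N → A → A) (i j : N) (a : A) : Set A :=
  {x | ∃ m : ℕ, x = altIter act i j a m ∨ x = altIter act j i a m}

/-- The set of `ℕ₀`-linear combinations of elements of `s`. -/
def NSpan (s : Set (N →₀ ℝ)) : Set (N →₀ ℝ) :=
  (AddSubmonoid.closure s : Set (N →₀ ℝ))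

/-- A generalized root system: a transitive action of `F₂(N)` on `A` (axiom (1)),
roots `root a ⊆ ℝ^{(N)}` with simple roots `α n a` forming a basis (axiom (2)),
and maps `σ i a ∈ GL(ℝ^{(N)})`, satisfying axioms (3)-(7). -/
structure GRS (N : Type*) (A : Type*) where
  act : N → A → A
  act_invol : ∀ n a, act n (act n a) = a
  act_trans : ∀ a b : A, ∃ l : List N, l.foldr act a = b
  root : A → Set (N →₀ ℝ)
  α : N → A → N →₀ ℝ
  α_mem : ∀ n a, α n a ∈ root a
  α_indep : ∀ a, LinearIndependent ℝ fun n => α n a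
  α_span : ∀ a, Submodule.span ℝ (Set.range fun n => α n a) = ⊤
  σ : N → A → (N →₀ ℝ) ≃ₗ[ℝ] (N →₀ ℝ)
  ax3 : ∀ a, root a =
    root a ∩ NSpan (Set.range fun n => α n a) ∪ -(root a ∩ NSpan (Set.range fun n => α n a))
  ax4 : ∀ i a, (Set.range fun r : ℝ => r • α i a) ∩ root a = {α i a, -α i a}
  ax5_root : ∀ i a, ⇑(σ i a) '' root a = root (act i a)
  ax5_diag : ∀ i a, σ i a (α i a) = -α i (act i a)
  ax5_off : ∀ i a j, j ≠ i →
    ∃ m : ℕ, σ i a (α j a) = α j (act i a) + (m : ℝ) • α i (act i a)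
  ax6 : ∀ i a v, σ i (act i a) (σ i a v) = v
  ax7 : ∀ a (i j : N), i ≠ j →
    (root a ∩ {β | ∃ p q : ℕ, β = (p : ℝ) • α i a + (q : ℝ) • α j a}).Finite →
    (ThetaSet act i j a).Finite ∧
      (ThetaSet act i j a).ncard ∣
        (root a ∩ {β | ∃ p q : ℕ, β = (p : ℝ) • α i a + (q : ℝ) • α j a}).ncard

/-- The positive roots `R⁺_a`. -/
def GRS.pos (G : GRS N A) (a : A) : Set (N →₀ ℝ) :=
  G.root a ∩ NSpan (Set.range fun n => G.α n a)

/-- The target `i₁ ⋯ i_m ▷ a` of the word `(i₁, …, i_m)` at `a`. -/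
def GRS.target (G : GRS N A) (l : List N) (a : A) : A :=
  l.foldr G.act a

/-- The σ-composite `σ_{i₁,b₁} ∘ ⋯ ∘ σ_{i_m,b_m}` of the word `(i₁, …, i_m)` at `a`. -/
noncomputable def GRS.wmap (G : GRS N A) : List N → A → (N →₀ ℝ) ≃ₗ[ℝ] (N →₀ ℝ)
  | [], _ => LinearEquiv.refl ℝ _
  | i :: l, a => (G.wmap l a).trans (G.σ i (G.target l a))

/-- The length `ℓ` of a word at `a`: the minimal length of a word at `a`
with the same target and the same σ-composite. -/
noncomputable def GRS.len (G : GRS N A) (l : List N) (a : A) : ℕ :=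
  sInf {m | ∃ l' : List N, l'.length = m ∧
    G.target l' a = G.target l a ∧ G.wmap l' a = G.wmap l a}

/-- A word of length `m` at `a` is reduced if `ℓ = m`. -/
def GRS.Reduced (G : GRS N A) (l : List N) (a : A) : Prop :=
  G.len l a = l.length

/-- `m_{i,j;a} = |R_a ∩ (ℕ₀ α_{i,a} + ℕ₀ α_{j,a})|`. -/
noncomputable def GRS.mij (G : GRS N A) (i j : N) (a : A) : ℕ :=
  (G.root a ∩ {β | ∃ p q : ℕ, β = (p : ℝ) • G.α i a + (q : ℝ) • G.α j a}).ncard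

/-- The alternating word `(i₁, …, i_m)` with `i_k = i` for `k` odd (leftmost letter `i`). -/
def altList (i j : N) : ℕ → List N
  | 0 => []
  | m + 1 => i :: altList j i m

/-- The alternating word of length `m` in the letters `i,j` whose rightmost letter is `i`. -/
def altR (i j : N) : ℕ → List N
  | 0 => []
  | m + 1 => altR j i m ++ [i]

/-- `a_m = i_m ⋯ i_1 ▷ a` for the alternating sequence with `i_k = i` for odd `k`. -/
def aIter (act : N → A → A) (i j : N) (a : A) : ℕ → A
  | 0 => a
  | m + 1 => act (if m % 2 = 0 then i else j) (aIter act i j a m)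

/-- The set of real roots `R^{re}_a`. -/
def GRS.reroot (G : GRS N A) (a : A) : Set (N →₀ ℝ) :=
  {β | ∃ (b : A) (l : List N) (n : N), G.target l b = a ∧ β = G.wmap l b (G.α n b)}

/-- The word `C(i,j;a)`: alternating of length `m_{i,j;a} - 1` with leftmost letter `i`. -/
noncomputable def GRS.Cword (G : GRS N A) (i j : N) (a : A) : List N :=
  altList i j (G.mij i j a - 1)

/-!
A simple reflection `σ_{i,b}` maps every positive root other than `α_{i,b}` to a positive root,
because it keeps the positive coefficient of such a root at some `α_{n,b}` with `n ≠ i`.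
If `w'` is the σ-composite of a word at `a` with target `b`, then `w'(R⁺_a)` contains exactly one
of `±α_{i,b}`, so prepending the letter `i` either adds `-α_{i,i▷b}` to
`σ_{i,b}(w'(R⁺_a) ∩ -R⁺_b)`, or removes `-α_{i,b}` from `w'(R⁺_a) ∩ -R⁺_b` before applying
`σ_{i,b}`. Thus each letter changes the cardinality by `±1`; cardinality `m` forces every step to
add a root, and the added roots are the `-v_r(α_{i_r,a_r})`.
-/

namespace GRS

section Coordinates

variable (G : GRS N A)

noncomputable def basis (a : A) : Module.Basis N ℝ (N →₀ ℝ) :=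
  Module.Basis.mk (G.α_indep a) (G.α_span a).ge

@[simp]
lemma basis_apply (a : A) (n : N) : G.basis a n = G.α n a :=
  Module.Basis.mk_apply _ _ _

@[simp]
lemma basis_repr_α (a : A) (n : N) : (G.basis a).repr (G.α n a) = Finsupp.single n 1 := by
  rw [← G.basis_apply, Module.Basis.repr_self]

lemma basis_repr_nonneg {a : A} {β : N →₀ ℝ} (hβ : β ∈ NSpan (Set.range fun n => G.α n a))
    (n : N) : 0 ≤ (G.basis a).repr β n := by
  induction hβ using AddSubmonoid.closure_induction with
  | mem x hx =>
    obtain ⟨m, rfl⟩ := hx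
    rw [basis_repr_α]
    exact Finsupp.single_nonneg.mpr zero_le_one n
  | zero => simp
  | add x y _ _ hx hy => simpa only [map_add, Finsupp.add_apply] using add_nonneg hx hy

lemma basis_repr_σ_of_ne {i n : N} (hn : n ≠ i) (a : A) (β : N →₀ ℝ) :
    (G.basis (G.act i a)).repr (G.σ i a β) n = (G.basis a).repr β n := by
  suffices ((G.basis (G.act i a)).coord n).comp (G.σ i a).toLinearMap = (G.basis a).coord n from
    LinearMap.congr_fun this β
  refine (G.basis a).ext fun m => ?_
  simp only [LinearMap.comp_apply, Module.Basis.coord_apply, LinearEquiv.coe_coe, basis_apply]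
  rcases eq_or_ne m i with rfl | hm
  · simp [G.ax5_diag, hn.symm]
  · obtain ⟨k, hk⟩ := G.ax5_off i a m hm
    simp [hk, hn.symm]

lemma root_eq_pos_union_neg (a : A) : G.root a = G.pos a ∪ -G.pos a := G.ax3 a

lemma α_mem_pos (i : N) (a : A) : G.α i a ∈ G.pos a :=
  ⟨G.α_mem i a, AddSubmonoid.subset_closure ⟨i, rfl⟩⟩

end Coordinates

section PositiveRoots

variable [Nonempty N] (G : GRS N A)

lemma zero_notMem_root (a : A) : (0 : N →₀ ℝ) ∉ G.root a := by
  intro h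
  obtain ⟨i⟩ := ‹Nonempty N›
  have h0 : (0 : N →₀ ℝ) ∈ (Set.range fun r : ℝ => r • G.α i a) ∩ G.root a :=
    ⟨⟨0, zero_smul _ _⟩, h⟩
  rw [G.ax4] at h0
  rcases h0 with h0 | h0
  · exact (G.α_indep a).ne_zero i h0.symm
  · exact (G.α_indep a).ne_zero i (neg_eq_zero.mp h0.symm)

lemma notMem_neg_pos_of_mem_pos {a : A} {β : N →₀ ℝ} (hβ : β ∈ G.pos a) : β ∉ -G.pos a := by
  intro hβ'
  have hzero : β = 0 := (G.basis a).ext_elem fun n => by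
    have h₁ := G.basis_repr_nonneg hβ.2 n
    have h₂ := G.basis_repr_nonneg hβ'.2 n
    simp only [map_neg, Finsupp.neg_apply, map_zero, Finsupp.coe_zero, Pi.zero_apply] at h₂ ⊢
    linarith
  exact G.zero_notMem_root a (hzero ▸ hβ.1)

lemma neg_mem_pos_iff {a : A} {β : N →₀ ℝ} (hβ : β ∈ G.root a) : -β ∈ G.pos a ↔ β ∉ G.pos a := by
  rw [G.root_eq_pos_union_neg] at hβ
  exact ⟨fun h hpos => G.notMem_neg_pos_of_mem_pos hpos h, hβ.resolve_left⟩

lemma neg_α_notMem_pos (i : N) (a : A) : -G.α i a ∉ G.pos a :=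
  (G.neg_mem_pos_iff (G.α_mem i a)).not.mpr (not_not.mpr (G.α_mem_pos i a))

lemma σ_mem_pos {i : N} {a : A} {β : N →₀ ℝ} (hβ : β ∈ G.pos a) (hne : β ≠ G.α i a) :
    G.σ i a β ∈ G.pos (G.act i a) := by
  obtain ⟨n, hni, hn⟩ : ∃ n ≠ i, (G.basis a).repr β n ≠ 0 := by
    by_contra! h
    have hβi : β = (G.basis a).repr β i • G.α i a := (G.basis a).ext_elem fun n => by
      rcases eq_or_ne n i with rfl | hn
      · simp
      · simp [h n hn, hn.symm]
    have hmem : β ∈ (Set.range fun r : ℝ => r • G.α i a) ∩ G.root a := ⟨⟨_, hβi.symm⟩, hβ.1⟩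
    rw [G.ax4] at hmem
    rcases hmem with rfl | rfl
    · exact hne rfl
    · exact G.neg_α_notMem_pos i a hβ
  have hroot : G.σ i a β ∈ G.root (G.act i a) := G.ax5_root i a ▸ Set.mem_image_of_mem _ hβ.1
  refine ((G.root_eq_pos_union_neg _ ▸ hroot).resolve_right fun hneg => hn ?_)
  have hle := G.basis_repr_nonneg hneg.2 n
  rw [map_neg, Finsupp.neg_apply, G.basis_repr_σ_of_ne hni] at hle
  exact le_antisymm (neg_nonneg.mp hle) (G.basis_repr_nonneg hβ.2 n)

lemma σ_mem_neg_pos_iff {i : N} {b : A} {y : N →₀ ℝ} (hy : y ∈ G.root b) :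
    G.σ i b y ∈ -G.pos (G.act i b) ↔ y = G.α i b ∨ (y ∈ -G.pos b ∧ y ≠ -G.α i b) := by
  constructor
  · intro h
    rcases G.root_eq_pos_union_neg b ▸ hy with hpos | hneg
    · exact .inl (by_contra fun hne => G.notMem_neg_pos_of_mem_pos (G.σ_mem_pos hpos hne) h)
    · refine .inr ⟨hneg, ?_⟩
      rintro rfl
      rw [map_neg, G.ax5_diag, neg_neg] at h
      exact G.notMem_neg_pos_of_mem_pos (G.α_mem_pos i _) h
  · rintro (rfl | ⟨hneg, hne⟩)
    · rw [G.ax5_diag, Set.neg_mem_neg]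
      exact G.α_mem_pos i _
    · rw [Set.mem_neg, ← map_neg]
      exact G.σ_mem_pos hneg fun h => hne (neg_eq_iff_eq_neg.mp h)

end PositiveRoots

section Words

variable (G : GRS N A)

lemma target_take_drop (l : List N) (r : ℕ) (a : A) :
    G.target (l.take r) (G.target (l.drop r) a) = G.target l a := by
  unfold target
  rw [← List.foldr_append, List.take_append_drop]

lemma coe_wmap_cons (i : N) (l : List N) (a : A) :
    ⇑(G.wmap (i :: l) a) = G.σ i (G.target l a) ∘ G.wmap l a := rfl

lemma image_wmap_root (l : List N) (a : A) : G.wmap l a '' G.root a = G.root (G.target l a) := by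
  induction l with
  | nil => exact Set.image_id _
  | cons i l ih => rw [coe_wmap_cons, Set.image_comp, ih, G.ax5_root]; rfl

lemma image_wmap_pos_subset_root (l : List N) (a : A) :
    G.wmap l a '' G.pos a ⊆ G.root (G.target l a) :=
  G.image_wmap_root l a ▸ Set.image_mono Set.inter_subset_left

lemma neg_mem_image_wmap_pos_iff [Nonempty N] {l : List N} {a : A} {y : N →₀ ℝ}
    (hy : y ∈ G.root (G.target l a)) :
    -y ∈ G.wmap l a '' G.pos a ↔ y ∉ G.wmap l a '' G.pos a := by
  obtain ⟨β, hβ, rfl⟩ := G.image_wmap_root l a ▸ hy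
  rw [← map_neg, (G.wmap l a).injective.mem_set_image, (G.wmap l a).injective.mem_set_image]
  exact G.neg_mem_pos_iff hβ

def inversionSet (l : List N) (a : A) : Set (N →₀ ℝ) :=
  G.wmap l a '' G.pos a ∩ -G.pos (G.target l a)

def wordRootSet (l : List N) (a : A) : Set (N →₀ ℝ) :=
  {β | ∃ k : Fin l.length,
    β = -(G.wmap (l.take (k : ℕ)) (G.target (l.drop (k : ℕ)) a)
      (G.α (l.get k) (G.target (l.drop (k : ℕ)) a)))}

lemma inversionSet_cons (i : N) (l : List N) (a : A) :
    G.inversionSet (i :: l) a = G.σ i (G.target l a) ''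
      (G.wmap l a '' G.pos a ∩ G.σ i (G.target l a) ⁻¹' (-G.pos (G.act i (G.target l a)))) := by
  rw [inversionSet, coe_wmap_cons, Set.image_comp, Set.image_inter_preimage]
  rfl

lemma wordRootSet_cons (i : N) (l : List N) (a : A) :
    G.wordRootSet (i :: l) a =
      insert (-G.α i (G.act i (G.target l a))) (G.σ i (G.target l a) '' G.wordRootSet l a) := by
  ext x
  simp only [wordRootSet, Set.mem_ofPred_eq, Set.mem_insert_iff, Set.mem_image]
  refine Fin.exists_fin_succ.trans (or_congr Iff.rfl ?_)
  simp only [Fin.val_succ, List.take_succ_cons, List.drop_succ_cons]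
  have hσ (k : Fin l.length) (v : N →₀ ℝ) :
      G.wmap (i :: l.take k) (G.target (l.drop k) a) v =
        G.σ i (G.target l a) (G.wmap (l.take k) (G.target (l.drop k) a) v) := by
    rw [coe_wmap_cons, Function.comp_apply, target_take_drop]
  constructor
  · rintro ⟨k, rfl⟩
    exact ⟨_, ⟨k, rfl⟩, by rw [map_neg, hσ]; rfl⟩
  · rintro ⟨_, ⟨k, rfl⟩, rfl⟩
    exact ⟨k, by rw [map_neg, hσ]; rfl⟩

end Words

section InversionSets

variable [Nonempty N] (G : GRS N A)

lemma inversionSet_nil (a : A) : G.inversionSet [] a = ∅ :=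
  Set.eq_empty_of_forall_notMem <| by
    rintro _ ⟨⟨β, hβ, rfl⟩, hneg⟩
    exact G.notMem_neg_pos_of_mem_pos hβ hneg

lemma inversionSet_cons_of_mem {i : N} {l : List N} {a : A}
    (h : G.α i (G.target l a) ∈ G.wmap l a '' G.pos a) :
    G.inversionSet (i :: l) a =
      insert (-G.α i (G.act i (G.target l a))) (G.σ i (G.target l a) '' G.inversionSet l a) := by
  have hpre : G.wmap l a '' G.pos a ∩ G.σ i (G.target l a) ⁻¹' (-G.pos (G.act i (G.target l a))) =
      insert (G.α i (G.target l a)) (G.inversionSet l a) := by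
    ext y
    constructor
    · rintro ⟨hyS, hy⟩
      rcases (G.σ_mem_neg_pos_iff (G.image_wmap_pos_subset_root l a hyS)).mp hy with
        rfl | ⟨hneg, -⟩
      · exact .inl rfl
      · exact .inr ⟨hyS, hneg⟩
    · rintro (rfl | ⟨hyS, hneg⟩)
      · exact ⟨h, (G.σ_mem_neg_pos_iff (G.α_mem i _)).mpr (.inl rfl)⟩
      · refine ⟨hyS, (G.σ_mem_neg_pos_iff (G.image_wmap_pos_subset_root l a hyS)).mpr
          (.inr ⟨hneg, ?_⟩)⟩
        rintro rfl
        exact (G.neg_mem_image_wmap_pos_iff (G.α_mem i _)).mp hyS h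
  rw [inversionSet_cons, hpre, Set.image_insert_eq, G.ax5_diag]

lemma inversionSet_cons_of_notMem {i : N} {l : List N} {a : A}
    (h : G.α i (G.target l a) ∉ G.wmap l a '' G.pos a) :
    G.inversionSet (i :: l) a =
      G.σ i (G.target l a) '' (G.inversionSet l a \ {-G.α i (G.target l a)}) := by
  have hpre : G.wmap l a '' G.pos a ∩ G.σ i (G.target l a) ⁻¹' (-G.pos (G.act i (G.target l a))) =
      G.inversionSet l a \ {-G.α i (G.target l a)} := by
    ext y
    constructor
    · rintro ⟨hyS, hy⟩
      rcases (G.σ_mem_neg_pos_iff (G.image_wmap_pos_subset_root l a hyS)).mp hy with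
        rfl | ⟨hneg, hne⟩
      · exact absurd hyS h
      · exact ⟨⟨hyS, hneg⟩, hne⟩
    · rintro ⟨⟨hyS, hneg⟩, hne⟩
      exact ⟨hyS, (G.σ_mem_neg_pos_iff (G.image_wmap_pos_subset_root l a hyS)).mpr
        (.inr ⟨hneg, hne⟩)⟩
  rw [inversionSet_cons, hpre]

lemma neg_α_mem_inversionSet {i : N} {l : List N} {a : A}
    (h : G.α i (G.target l a) ∉ G.wmap l a '' G.pos a) :
    -G.α i (G.target l a) ∈ G.inversionSet l a :=
  ⟨(G.neg_mem_image_wmap_pos_iff (G.α_mem i _)).mpr h, Set.neg_mem_neg.mpr (G.α_mem_pos i _)⟩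

lemma neg_α_notMem_image_inversionSet (i : N) (l : List N) (a : A) :
    -G.α i (G.act i (G.target l a)) ∉ G.σ i (G.target l a) '' G.inversionSet l a := by
  rw [← G.ax5_diag, (G.σ i _).injective.mem_set_image]
  exact fun h => G.notMem_neg_pos_of_mem_pos (G.α_mem_pos i _) h.2

lemma inversionSet_finite (l : List N) (a : A) : (G.inversionSet l a).Finite := by
  induction l with
  | nil => simp [inversionSet_nil]
  | cons i l ih =>
    by_cases h : G.α i (G.target l a) ∈ G.wmap l a '' G.pos a
    · rw [G.inversionSet_cons_of_mem h]
      exact (ih.image _).insert _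
    · rw [G.inversionSet_cons_of_notMem h]
      exact ih.sdiff.image _

lemma ncard_inversionSet_cons_of_mem {i : N} {l : List N} {a : A}
    (h : G.α i (G.target l a) ∈ G.wmap l a '' G.pos a) :
    (G.inversionSet (i :: l) a).ncard = (G.inversionSet l a).ncard + 1 := by
  rw [G.inversionSet_cons_of_mem h, Set.ncard_insert_of_notMem
      (G.neg_α_notMem_image_inversionSet i l a) ((G.inversionSet_finite l a).image _),
    Set.ncard_image_of_injective _ (G.σ i _).injective]

lemma ncard_inversionSet_cons_of_notMem {i : N} {l : List N} {a : A}
    (h : G.α i (G.target l a) ∉ G.wmap l a '' G.pos a) :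
    (G.inversionSet (i :: l) a).ncard + 1 = (G.inversionSet l a).ncard := by
  rw [G.inversionSet_cons_of_notMem h, Set.ncard_image_of_injective _ (G.σ i _).injective,
    Set.ncard_sdiff_singleton_add_one (G.neg_α_mem_inversionSet h) (G.inversionSet_finite l a)]

lemma exists_ncard_inversionSet_add_two_mul (l : List N) (a : A) :
    ∃ k : ℕ, (G.inversionSet l a).ncard + 2 * k = l.length := by
  induction l with
  | nil => exact ⟨0, by simp [inversionSet_nil]⟩
  | cons i l ih =>
    obtain ⟨k, hk⟩ := ih
    by_cases h : G.α i (G.target l a) ∈ G.wmap l a '' G.pos a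
    · have := G.ncard_inversionSet_cons_of_mem h
      exact ⟨k, by simp only [List.length_cons]; omega⟩
    · have := G.ncard_inversionSet_cons_of_notMem h
      exact ⟨k + 1, by simp only [List.length_cons]; omega⟩

lemma inversionSet_eq_wordRootSet_of_ncard_eq (l : List N) (a : A)
    (hcard : (G.inversionSet l a).ncard = l.length) :
    G.inversionSet l a = G.wordRootSet l a := by
  induction l with
  | nil => simp [inversionSet_nil, wordRootSet]
  | cons i l ih =>
    rw [List.length_cons] at hcard
    by_cases h : G.α i (G.target l a) ∈ G.wmap l a '' G.pos a
    · have := G.ncard_inversionSet_cons_of_mem h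
      rw [G.inversionSet_cons_of_mem h, wordRootSet_cons, ih (by omega)]
    · have := G.ncard_inversionSet_cons_of_notMem h
      obtain ⟨k, hk⟩ := G.exists_ncard_inversionSet_add_two_mul l a
      omega

end InversionSets

end GRS

theorem stmt2_general [Nonempty N] (G : GRS N A) (l : List N) (a : A) :
    (⇑(G.wmap l a) '' G.pos a ∩ -G.pos (G.target l a)).Finite ∧
    (∃ k : ℕ, (⇑(G.wmap l a) '' G.pos a ∩ -G.pos (G.target l a)).ncard + 2 * k = l.length) ∧
    ((⇑(G.wmap l a) '' G.pos a ∩ -G.pos (G.target l a)).ncard = l.length →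
      ⇑(G.wmap l a) '' G.pos a ∩ -G.pos (G.target l a) =
        {β | ∃ k : Fin l.length,
          β = -(G.wmap (l.take (k : ℕ)) (G.target (l.drop (k : ℕ)) a)
              (G.α (l.get k) (G.target (l.drop (k : ℕ)) a)))}) :=
  ⟨G.inversionSet_finite l a, G.exists_ncard_inversionSet_add_two_mul l a,
    G.inversionSet_eq_wordRootSet_of_ncard_eq l a⟩

/-- `w(R⁺_a) ∩ (−R⁺_{a₁})` is finite, `m` minus its cardinality is a
nonnegative even integer, and if the cardinality equals `m` then the set consists of the
elements `−v_r(α_{i_r,a_r})`, `1 ≤ r ≤ m`. -/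
theorem stmt2 [Nonempty N] [Nonempty A] (G : GRS N A) (l : List N) (a : A) :
    (⇑(G.wmap l a) '' G.pos a ∩ -G.pos (G.target l a)).Finite ∧
    (∃ k : ℕ, (⇑(G.wmap l a) '' G.pos a ∩ -G.pos (G.target l a)).ncard + 2 * k = l.length) ∧
    ((⇑(G.wmap l a) '' G.pos a ∩ -G.pos (G.target l a)).ncard = l.length →
      ⇑(G.wmap l a) '' G.pos a ∩ -G.pos (G.target l a) =
        {β | ∃ k : Fin l.length,
          β = -(G.wmap (l.take (k : ℕ)) (G.target (l.drop (k : ℕ)) a)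
              (G.α (l.get k) (G.target (l.drop (k : ℕ)) a)))}) :=
  stmt2_general G l a
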